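/- arXiv:1410.6262 — 6 statements merged into one kernel-verified Lean document; each statement's English description precedes it below -/
import Mathlib

section
/- For ε = ±1, the map H₃^ε(z,w) = (z, (1−ε+(1+ε)z²)w/(2z), (1−ε+(1+ε)z)w²/(2z)) sends the unit sphere in ℂ² into the hyperquadric Q_ε wherever it is defined: for every (z,w) ∈ ℂ² with |z|² + |w|² = 1 and z ≠ 0 one has |z|² + |(1−ε+(1+ε)z²)w/(2z)|² + ε·|(1−ε+(1+ε)z)w²/(2z)|² = 1. -/
noncomputable section

/-- For ε = ±1 the map H₃^ε(z,w) = (z, (1-ε+(1+ε)z²)w/(2z), (1-ε+(1+ε)z)w²/(2z)) sends the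
unit sphere in ℂ² into the hyperquadric Q_ε wherever it is defined. -/
theorem stmt_1 (ε : ℝ) (hε : ε = 1 ∨ ε = -1) (z w : ℂ)
    (h : ‖z‖ ^ 2 + ‖w‖ ^ 2 = 1) (hz : z ≠ 0) :
    ‖z‖ ^ 2
      + ‖(1 - (ε : ℂ) + (1 + (ε : ℂ)) * z ^ 2) * w / (2 * z)‖ ^ 2
      + ε * ‖(1 - (ε : ℂ) + (1 + (ε : ℂ)) * z) * w ^ 2 / (2 * z)‖ ^ 2 = 1 := by
  have ha : ‖z‖ ≠ 0 := by simpa using hz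
  rcases hε with rfl | rfl
  · have e1 : (1 - (1:ℝ) + (1 + (1:ℝ)) * z ^ 2 : ℂ) * w / (2 * z) = z * w := by
      push_cast; field_simp; ring
    have e2 : (1 - (1:ℝ) + (1 + (1:ℝ)) * z : ℂ) * w ^ 2 / (2 * z) = w ^ 2 := by
      push_cast; field_simp; ring
    rw [e1, e2]
    simp only [norm_mul, norm_pow, mul_pow]
    nlinarith [sq_nonneg ‖z‖, sq_nonneg ‖w‖]
  · have e1 : (1 - ((-1:ℝ):ℂ) + (1 + ((-1:ℝ):ℂ)) * z ^ 2) * w / (2 * z) = w / z := by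
      push_cast; field_simp; ring
    have e2 : (1 - ((-1:ℝ):ℂ) + (1 + ((-1:ℝ):ℂ)) * z) * w ^ 2 / (2 * z) = w ^ 2 / z := by
      push_cast; field_simp; ring
    rw [e1, e2]
    simp only [norm_div, norm_pow, div_pow]
    field_simp
    nlinarith [sq_nonneg ‖z‖, sq_nonneg ‖w‖]

end
end

section
/- For ε = ±1, the map H₄^ε(z,w) = (4z³, (3(1−ε)+(1+3ε)w²)w, √3(1−ε+2(1+ε)w+(1−ε)w²)z) / (1+3ε+3(1−ε)w²) sends the unit sphere in ℂ² into the hyperquadric Q_ε wherever it is defined: for every (z,w) ∈ ℂ² with |z|² + |w|² = 1 and 1+3ε+3(1−ε)w² ≠ 0, the point H₄^ε(z,w) lies in Q_ε. -/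
noncomputable section

/-- For ε = ±1 the map H₄^ε sends the unit sphere in ℂ² into the hyperquadric Q_ε wherever
it is defined. -/
theorem stmt_2 (ε : ℝ) (hε : ε = 1 ∨ ε = -1) (z w : ℂ)
    (h : norm z ^ 2 + norm w ^ 2 = 1)
    (hd : 1 + 3 * (ε : ℂ) + 3 * (1 - (ε : ℂ)) * w ^ 2 ≠ 0) :
    norm (4 * z ^ 3 / (1 + 3 * (ε : ℂ) + 3 * (1 - (ε : ℂ)) * w ^ 2)) ^ 2
      + norm ((3 * (1 - (ε : ℂ)) + (1 + 3 * (ε : ℂ)) * w ^ 2) * w /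
          (1 + 3 * (ε : ℂ) + 3 * (1 - (ε : ℂ)) * w ^ 2)) ^ 2
      + ε * norm ((Real.sqrt 3 : ℂ) *
          (1 - (ε : ℂ) + 2 * (1 + (ε : ℂ)) * w + (1 - (ε : ℂ)) * w ^ 2) * z /
          (1 + 3 * (ε : ℂ) + 3 * (1 - (ε : ℂ)) * w ^ 2)) ^ 2 = 1 := by
  rw [Complex.sq_norm, Complex.sq_norm] at h
  have ha : Complex.normSq z = 1 - Complex.normSq w := by linarith
  have h33 : Real.sqrt 3 * Real.sqrt 3 = 3 := Real.mul_self_sqrt (by norm_num)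
  rcases hε with rfl | rfl
  · push_cast at hd ⊢
    have hD : Complex.normSq (1 + 3 * (1 : ℂ) + 3 * (1 - (1 : ℂ)) * w ^ 2) ≠ 0 := by
      simpa [Complex.normSq_eq_zero] using hd
    simp only [Complex.sq_norm]
    simp only [map_div₀, map_mul, map_pow, ha]
    rw [← mul_div_assoc, ← add_div, ← add_div, div_eq_one_iff_eq hD]
    simp only [pow_two, Complex.normSq_apply, Complex.normSq_ofReal, Complex.add_re,
      Complex.add_im, Complex.mul_re, Complex.mul_im, Complex.sub_re, Complex.sub_im,
      Complex.one_re, Complex.one_im, Complex.re_ofNat, Complex.im_ofNat, Complex.neg_re,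
      Complex.neg_im, Complex.ofReal_re, Complex.ofReal_im]
    rw [h33]
    ring
  · push_cast at hd ⊢
    have hD : Complex.normSq (1 + 3 * (-1 : ℂ) + 3 * (1 - (-1 : ℂ)) * w ^ 2) ≠ 0 := by
      simpa [Complex.normSq_eq_zero] using hd
    simp only [Complex.sq_norm]
    simp only [map_div₀, map_mul, map_pow, ha]
    rw [← mul_div_assoc, ← add_div, ← add_div, div_eq_one_iff_eq hD]
    simp only [pow_two, Complex.normSq_apply, Complex.normSq_ofReal, Complex.add_re,
      Complex.add_im, Complex.mul_re, Complex.mul_im, Complex.sub_re, Complex.sub_im,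
      Complex.one_re, Complex.one_im, Complex.re_ofNat, Complex.im_ofNat, Complex.neg_re,
      Complex.neg_im, Complex.ofReal_re, Complex.ofReal_im]
    rw [h33]
    ring
end
end

section
/- The map H₅(z,w) = ((2+√2 z)z/(1+√2 z+w), w, (1+√2 z−w)z/(1+√2 z+w)) sends the unit sphere in ℂ² into the hyperquadric Q₋ wherever it is defined: for every (z,w) ∈ ℂ² with |z|² + |w|² = 1 and 1+√2 z+w ≠ 0 one has |(2+√2 z)z/(1+√2 z+w)|² + |w|² − |(1+√2 z−w)z/(1+√2 z+w)|² = 1. -/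
noncomputable section

/-- The map H₅ sends the unit sphere in ℂ² into the hyperquadric Q₋ of signature (2,1)
wherever it is defined. -/
theorem stmt_3 (z w : ℂ) (h : ‖z‖ ^ 2 + ‖w‖ ^ 2 = 1)
    (hd : 1 + (Real.sqrt 2 : ℂ) * z + w ≠ 0) :
    ‖(2 + (Real.sqrt 2 : ℂ) * z) * z / (1 + (Real.sqrt 2 : ℂ) * z + w)‖ ^ 2
      + ‖w‖ ^ 2
      - ‖(1 + (Real.sqrt 2 : ℂ) * z - w) * z /
          (1 + (Real.sqrt 2 : ℂ) * z + w)‖ ^ 2 = 1 := by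
  have hd' : Complex.normSq (1 + (Real.sqrt 2 : ℂ) * z + w) ≠ 0 := by
    simpa [Complex.normSq_eq_zero] using hd
  simp only [Complex.sq_norm] at h ⊢
  rw [Complex.normSq_div, Complex.normSq_div]
  field_simp
  have hs : Real.sqrt 2 ^ 2 = 2 := Real.sq_sqrt (by norm_num)
  simp only [Complex.normSq_apply, Complex.add_re, Complex.add_im, Complex.mul_re,
    Complex.mul_im, Complex.sub_re, Complex.sub_im, Complex.one_re, Complex.one_im,
    Complex.ofReal_re, Complex.ofReal_im, Complex.re_ofNat, Complex.im_ofNat] at h ⊢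
  linear_combination (((1 + Real.sqrt 2 * z.re + w.re)^2 + (Real.sqrt 2 * z.im + w.im)^2
      - 2 * (z.re^2 + z.im^2)) * h - (z.re^2 + z.im^2)^2 * hs)
end
end

section
/- The map H₆(z,w) = ((1−w)z, 1+w−w², (1+w)z)/(1−w−w²) sends the unit sphere in ℂ² into the hyperquadric Q₋ wherever it is defined: for every (z,w) ∈ ℂ² with |z|² + |w|² = 1 and 1−w−w² ≠ 0 one has |(1−w)z|² + |1+w−w²|² − |(1+w)z|² = |1−w−w²|². -/
noncomputable section

/-- The map H₆ sends the unit sphere in ℂ² into the hyperquadric Q₋ of signature (2,1)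
wherever it is defined. -/
theorem stmt_4 (z w : ℂ) (h : ‖z‖ ^ 2 + ‖w‖ ^ 2 = 1)
    (hd : 1 - w - w ^ 2 ≠ 0) :
    ‖(1 - w) * z‖ ^ 2 + ‖1 + w - w ^ 2‖ ^ 2
      - ‖(1 + w) * z‖ ^ 2 = ‖1 - w - w ^ 2‖ ^ 2 := by
  simp only [Complex.sq_norm] at h ⊢
  simp only [sq, Complex.normSq_apply, Complex.mul_re, Complex.mul_im,
    Complex.sub_re, Complex.sub_im, Complex.add_re, Complex.add_im, Complex.one_re,
    Complex.one_im] at h ⊢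
  linear_combination (-4*w.re) * h
end
end

section
/- Fix ε = ±1 and σ ∈ {±1} with σ = +1 when ε = +1. For every γ' = (λ',r',u',a',c') ∈ Γ' := ℝ₊ × ℝ × S¹ × 𝒮 × ℂ², where 𝒮 := {(a₁',a₂') ∈ ℂ² : |a₁'|² + ε|a₂'|² = σ}, let U' be the 2×2 matrix with rows (u'a₁', −εu'a₂') and (conj(a₂'), conj(a₁')), and define σ'_{γ'}(z₁',z₂',w') := (λ' U'·ᵗ((z₁',z₂') + c'w'), σλ'²w') / (1 − 2i(conj(c₁')z₁' + ε·conj(c₂')z₂') + (r' − i(|c₁'|² + ε|c₂'|²))w'). Then σ'_{γ'}(0) = 0 and σ'_{γ'} maps ℍ³_ε into itself: whenever Im w' = |z₁'|² + ε|z₂'|² and the denominator is nonzero, the image point again lies on ℍ³_ε. -/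
noncomputable section

open Complex Filter

/-- Partial derivative in the first (z) variable. -/
def pz (f : ℂ × ℂ → ℂ) : ℂ × ℂ → ℂ := fun p => deriv (fun z => f (z, p.2)) p.1

/-- Partial derivative in the second (w) variable. -/
def pw (f : ℂ × ℂ → ℂ) : ℂ × ℂ → ℂ := fun p => deriv (fun w => f (p.1, w)) p.2

/-- The Heisenberg hypersurface ℍ² = {(z,w) : Im w = |z|²} in ℂ². -/
def heis2 : Set (ℂ × ℂ) := {p | p.2.im = ‖p.1‖ ^ 2}

/-- The Heisenberg hypersurface ℍ³_ε = {(z₁,z₂,w) : Im w = |z₁|² + ε|z₂|²} in ℂ³. -/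
def heis3 (ε : ℝ) : Set (ℂ × ℂ × ℂ) :=
  {q | q.2.2.im = ‖q.1‖ ^ 2 + ε * ‖q.2.1‖ ^ 2}

/-- Denominator of the isotropy σ_γ of (ℍ²,0). -/
def sigmaDen (r : ℝ) (c : ℂ) (p : ℂ × ℂ) : ℂ :=
  1 - 2 * Complex.I * (starRingEnd ℂ c) * p.1 +
    ((r : ℂ) - Complex.I * (Complex.normSq c : ℂ)) * p.2

/-- The isotropy σ_γ of (ℍ²,0) with parameters γ = (λ,r,u,c) ∈ ℝ₊ × ℝ × S¹ × ℂ. -/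
def sigmaMap (lam r : ℝ) (u c : ℂ) : ℂ × ℂ → ℂ × ℂ := fun p =>
  (((lam : ℂ) * u * (p.1 + c * p.2)) / sigmaDen r c p,
   ((lam : ℂ) ^ 2 * p.2) / sigmaDen r c p)

/-- Denominator of the isotropy σ'_{γ'} of (ℍ³_ε,0). -/
def sigmaDen' (ε r' : ℝ) (c₁ c₂ : ℂ) (q : ℂ × ℂ × ℂ) : ℂ :=
  1 - 2 * Complex.I * ((starRingEnd ℂ c₁) * q.1 + (ε : ℂ) * (starRingEnd ℂ c₂) * q.2.1) +
    ((r' : ℂ) - Complex.I * ((Complex.normSq c₁ : ℂ) + (ε : ℂ) * (Complex.normSq c₂ : ℂ))) *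
      q.2.2

/-- The isotropy σ'_{γ'} of (ℍ³_ε,0) with parameters γ' = (λ',r',u',(a₁,a₂),(c₁,c₂)) and
sign σ = ±1; the first two components are λ'·U'·ᵗ((z₁,z₂)+c'w) divided by the denominator,
where U' has rows (u'a₁, -εu'a₂) and (conj a₂, conj a₁). -/
def sigmaMap' (ε σ lam' r' : ℝ) (u' a₁ a₂ c₁ c₂ : ℂ) : ℂ × ℂ × ℂ → ℂ × ℂ × ℂ := fun q =>
  (((lam' : ℂ) * (u' * a₁ * (q.1 + c₁ * q.2.2) - (ε : ℂ) * u' * a₂ * (q.2.1 + c₂ * q.2.2))) /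
      sigmaDen' ε r' c₁ c₂ q,
   ((lam' : ℂ) * ((starRingEnd ℂ a₂) * (q.1 + c₁ * q.2.2) +
        (starRingEnd ℂ a₁) * (q.2.1 + c₂ * q.2.2))) / sigmaDen' ε r' c₁ c₂ q,
   ((σ : ℂ) * (lam' : ℂ) ^ 2 * q.2.2) / sigmaDen' ε r' c₁ c₂ q)

/-- The normalized map G₁^ε(z,w) = (2z(2+iεw), 4z², 4w)/(4-w²). -/
def G1 (ε : ℝ) : ℂ × ℂ → ℂ × ℂ × ℂ := fun p =>
  ((2 * p.1 * (2 + Complex.I * (ε : ℂ) * p.2)) / (4 - p.2 ^ 2),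
   (4 * p.1 ^ 2) / (4 - p.2 ^ 2),
   (4 * p.2) / (4 - p.2 ^ 2))

def G2den (ε s : ℝ) (p : ℂ × ℂ) : ℂ :=
  4 - 4 * (ε : ℂ) * (s : ℂ) * p.1 - Complex.I * ((ε : ℂ) + (s : ℂ) ^ 2) * p.2
    - 2 * Complex.I * (s : ℂ) * p.1 * p.2 - (ε : ℂ) * (s : ℂ) ^ 2 * p.2 ^ 2

/-- The normalized family G₂,ₛ^ε. -/
def G2 (ε s : ℝ) : ℂ × ℂ → ℂ × ℂ × ℂ := fun p =>
  ((4 * p.1 - 4 * (ε : ℂ) * (s : ℂ) * p.1 ^ 2 + Complex.I * ((ε : ℂ) - (s : ℂ) ^ 2) * p.1 * p.2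
      + (s : ℂ) * p.2 ^ 2) / G2den ε s p,
   (4 * p.1 ^ 2 + (s : ℂ) ^ 2 * p.2 ^ 2) / G2den ε s p,
   (p.2 * (4 - 4 * (ε : ℂ) * (s : ℂ) * p.1 - Complex.I * ((ε : ℂ) + (s : ℂ) ^ 2) * p.2)) /
      G2den ε s p)

def G3den (ε s : ℝ) (p : ℂ × ℂ) : ℂ :=
  256 * (ε : ℂ) - 32 * Complex.I * p.2 + 64 * p.1 ^ 2
    - 192 * Complex.I * (ε : ℂ) * (s : ℂ) * p.1 * p.2
    - (17 * (ε : ℂ) + 144 * (s : ℂ) ^ 2) * p.2 ^ 2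
    + 32 * Complex.I * (ε : ℂ) * p.1 ^ 2 * p.2
    + 24 * (s : ℂ) * p.1 * p.2 ^ 2 + Complex.I * p.2 ^ 3

/-- The normalized family G₃,ₛ^ε. -/
def G3 (ε s : ℝ) : ℂ × ℂ → ℂ × ℂ × ℂ := fun p =>
  ((256 * (ε : ℂ) * p.1 + 96 * Complex.I * p.1 * p.2 + 64 * (ε : ℂ) * (s : ℂ) * p.2 ^ 2
      + 64 * p.1 ^ 3 + 64 * Complex.I * (ε : ℂ) * (s : ℂ) * p.1 ^ 2 * p.2
      - 3 * (3 * (ε : ℂ) - 16 * (s : ℂ) ^ 2) * p.1 * p.2 ^ 2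
      + 4 * Complex.I * (s : ℂ) * p.2 ^ 3) / G3den ε s p,
   (256 * (ε : ℂ) * p.1 ^ 2 - 16 * p.2 ^ 2 + 256 * (s : ℂ) * p.1 ^ 3
      + 16 * Complex.I * p.1 ^ 2 * p.2 - 16 * (ε : ℂ) * (s : ℂ) * p.1 * p.2 ^ 2
      - Complex.I * (ε : ℂ) * p.2 ^ 3) / G3den ε s p,
   (p.2 * (256 * (ε : ℂ) - 32 * Complex.I * p.2 + 64 * p.1 ^ 2
      - 64 * Complex.I * (ε : ℂ) * (s : ℂ) * p.1 * p.2
      - ((ε : ℂ) + 16 * (s : ℂ) ^ 2) * p.2 ^ 2)) / G3den ε s p)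

/-- H = (f₁,f₂,g) belongs to the class F2^ε on the neighborhood U of 0. -/
structure F2Mem (ε : ℝ) (f₁ f₂ g : ℂ × ℂ → ℂ) (U : Set (ℂ × ℂ)) : Prop where
  open_dom : IsOpen U
  connected_dom : IsConnected U
  mem_zero : ((0 : ℂ), (0 : ℂ)) ∈ U
  diff_f₁ : DifferentiableOn ℂ f₁ U
  diff_f₂ : DifferentiableOn ℂ f₂ U
  diff_g : DifferentiableOn ℂ g U
  maps_heis : ∀ p ∈ U, p ∈ heis2 → (f₁ p, f₂ p, g p) ∈ heis3 ε
  f₁_zero : f₁ (0, 0) = 0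
  f₂_zero : f₂ (0, 0) = 0
  g_zero : g (0, 0) = 0
  nondeg : pz f₁ (0, 0) * pz (pz f₂) (0, 0) - pz f₂ (0, 0) * pz (pz f₁) (0, 0) ≠ 0
  transversal_im : (pw g (0, 0)).im = 0
  transversal_re : 0 < (pw g (0, 0)).re

/-- H = (f₁,f₂,g) satisfies the normalization conditions (class N2^ε). -/
structure F2Norm (f₁ f₂ g : ℂ × ℂ → ℂ) : Prop where
  Hz₁ : pz f₁ (0, 0) = 1
  Hz₂ : pz f₂ (0, 0) = 0
  Hz₃ : pz g (0, 0) = 0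
  Hw₁ : pw f₁ (0, 0) = 0
  Hw₂ : pw f₂ (0, 0) = 0
  Hw₃ : pw g (0, 0) = 1
  f₂zz : pz (pz f₂) (0, 0) = 2
  f₂zw : pz (pw f₂) (0, 0) = 0
  f₁ww_im : (pw (pw f₁) (0, 0)).im = 0
  f₁ww_re : 0 ≤ (pw (pw f₁) (0, 0)).re
  gww_re : (pw (pw g) (0, 0)).re = 0
  f₂zzw_re : (pz (pz (pw f₂)) (0, 0)).re = 0

set_option maxHeartbeats 2000000 in
/-- Every isotropy σ'_{γ'}, γ' = (λ',r',u',a',c') ∈ ℝ₊ × ℝ × S¹ × 𝒮 × ℂ² (with sign σ),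
fixes 0 and maps the Heisenberg hypersurface ℍ³_ε into itself wherever its denominator does
not vanish. -/
theorem stmt_6 (ε σ : ℝ) (hε : ε = 1 ∨ ε = -1) (hσ : σ = 1 ∨ σ = -1) (hεσ : ε = 1 → σ = 1)
    (lam' r' : ℝ) (u' a₁ a₂ c₁ c₂ : ℂ) (hlam' : 0 < lam') (hu' : ‖u'‖ = 1)
    (ha : ‖a₁‖ ^ 2 + ε * ‖a₂‖ ^ 2 = σ) :
    sigmaMap' ε σ lam' r' u' a₁ a₂ c₁ c₂ (0, 0, 0) = (0, 0, 0) ∧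
    ∀ q : ℂ × ℂ × ℂ, q ∈ heis3 ε → sigmaDen' ε r' c₁ c₂ q ≠ 0 →
      sigmaMap' ε σ lam' r' u' a₁ a₂ c₁ c₂ q ∈ heis3 ε := by
  constructor
  · simp [sigmaMap', sigmaDen']
  · rintro ⟨z₁, z₂, w⟩ hq hD
    have hD' : (starRingEnd ℂ) (sigmaDen' ε r' c₁ c₂ (z₁, z₂, w)) ≠ 0 := by
      simpa using hD
    have hI : (2 : ℂ) * Complex.I ≠ 0 := by
      simp [Complex.I_ne_zero]
    have h1 : w - (starRingEnd ℂ) w =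
        2 * Complex.I * (z₁ * (starRingEnd ℂ) z₁ + (ε : ℂ) * (z₂ * (starRingEnd ℂ) z₂)) := by
      have h0 : (w.im : ℂ) = z₁ * (starRingEnd ℂ) z₁ + (ε : ℂ) * (z₂ * (starRingEnd ℂ) z₂) := by
        rw [Complex.mul_conj, Complex.mul_conj]
        have hq' : w.im = ‖z₁‖ ^ 2 + ε * ‖z₂‖ ^ 2 := hq
        rw [← Complex.sq_norm, ← Complex.sq_norm]
        exact_mod_cast congrArg (Complex.ofReal) hq'
      rw [Complex.sub_conj]; push_cast; rw [h0]; ring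
    have h2 : a₁ * (starRingEnd ℂ) a₁ + (ε : ℂ) * (a₂ * (starRingEnd ℂ) a₂) = (σ : ℂ) := by
      rw [Complex.mul_conj, Complex.mul_conj, ← Complex.sq_norm, ← Complex.sq_norm]
      exact_mod_cast congrArg (Complex.ofReal) ha
    have h3 : u' * (starRingEnd ℂ) u' = 1 := by
      rw [Complex.mul_conj, ← Complex.sq_norm, hu']; norm_num
    show (_ : ℂ).im = _
    rw [← Complex.ofReal_inj]
    push_cast [← Complex.sq_norm, Complex.sq_norm, ← Complex.mul_conj]
    have him : ∀ z : ℂ, (z.im : ℂ) = (z - (starRingEnd ℂ) z) / (2 * Complex.I) := by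
      intro z
      rw [eq_div_iff hI, Complex.sub_conj]; push_cast; ring
    rw [him]
    have hDa := hD
    have hDb := hD'
    simp only [sigmaDen', map_sub, map_add, map_mul, map_one, Complex.conj_conj,
      Complex.conj_I, Complex.conj_ofReal, map_ofNat, ← Complex.mul_conj] at hDa hDb
    simp only [sigmaMap', sigmaDen', map_div₀, map_mul, map_sub, map_add, map_one,
      Complex.conj_conj, Complex.conj_I, Complex.conj_ofReal, map_pow, map_ofNat,
      ← Complex.mul_conj]
    rw [div_sub_div _ _ hDa hDb, div_div, div_mul_div_comm, div_mul_div_comm,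
      ← mul_div_assoc, ← add_div,
      div_eq_div_iff (mul_ne_zero (mul_ne_zero hDa hDb) hI) (mul_ne_zero hDa hDb)]
    linear_combination ((σ:ℂ) * (lam':ℂ)^2 * ((1 - 2 * Complex.I * ((starRingEnd ℂ) c₁ * z₁ + (ε:ℂ) * (starRingEnd ℂ) c₂ * z₂) + ((r':ℂ) - Complex.I * (c₁ * (starRingEnd ℂ) c₁ + (ε:ℂ) * (c₂ * (starRingEnd ℂ) c₂))) * w) * (1 - 2 * -Complex.I * (c₁ * (starRingEnd ℂ) z₁ + (ε:ℂ) * c₂ * (starRingEnd ℂ) z₂) + ((r':ℂ) - -Complex.I * ((starRingEnd ℂ) c₁ * c₁ + (ε:ℂ) * ((starRingEnd ℂ) c₂ * c₂))) * (starRingEnd ℂ) w))) * h1 - (2 * Complex.I * (lam':ℂ)^2 * ((z₁ + c₁ * w) * ((starRingEnd ℂ) z₁ + (starRingEnd ℂ) c₁ * (starRingEnd ℂ) w) + (ε:ℂ) * ((z₂ + c₂ * w) * ((starRingEnd ℂ) z₂ + (starRingEnd ℂ) c₂ * (starRingEnd ℂ) w))) * ((1 - 2 * Complex.I * ((starRingEnd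 ℂ) c₁ * z₁ + (ε:ℂ) * (starRingEnd ℂ) c₂ * z₂) + ((r':ℂ) - Complex.I * (c₁ * (starRingEnd ℂ) c₁ + (ε:ℂ) * (c₂ * (starRingEnd ℂ) c₂))) * w) * (1 - 2 * -Complex.I * (c₁ * (starRingEnd ℂ) z₁ + (ε:ℂ) * c₂ * (starRingEnd ℂ) z₂) + ((r':ℂ) - -Complex.I * ((starRingEnd ℂ) c₁ * c₁ + (ε:ℂ) * ((starRingEnd ℂ) c₂ * c₂))) * (starRingEnd ℂ) w))) * h2 - (2 * Complex.I * (lam':ℂ)^2 * (a₁ * (starRingEnd ℂ) a₁ * (z₁ + c₁ * w) * ((starRingEnd ℂ) z₁ + (starRingEnd ℂ) c₁ * (starRingEnd ℂ) w) - (ε:ℂ) * a₁ * (starRingEnd ℂ) a₂ * (z₁ + c₁ * w) * ((starRingEnd ℂ) z₂ + (starRingEnd ℂ) c₂ * (starRingEnd ℂ) w) - (ε:ℂ) * a₂ * (starRingEnd ℂ) a₁ * (z₂ + c₂ * w) * ((starRingEnd ℂ) z₁ + (starRingEnd ℂ) c₁ * (starRingEnd ℂ) w) + (ε:ℂ)^2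 * a₂ * (starRingEnd ℂ) a₂ * (z₂ + c₂ * w) * ((starRingEnd ℂ) z₂ + (starRingEnd ℂ) c₂ * (starRingEnd ℂ) w)) * ((1 - 2 * Complex.I * ((starRingEnd ℂ) c₁ * z₁ + (ε:ℂ) * (starRingEnd ℂ) c₂ * z₂) + ((r':ℂ) - Complex.I * (c₁ * (starRingEnd ℂ) c₁ + (ε:ℂ) * (c₂ * (starRingEnd ℂ) c₂))) * w) * (1 - 2 * -Complex.I * (c₁ * (starRingEnd ℂ) z₁ + (ε:ℂ) * c₂ * (starRingEnd ℂ) z₂) + ((r':ℂ) - -Complex.I * ((starRingEnd ℂ) c₁ * c₁ + (ε:ℂ) * ((starRingEnd ℂ) c₂ * c₂))) * (starRingEnd ℂ) w))) * h3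
end
end

section
/- For ε = ±1 and every real s ≥ 0, the rational map G₃,ₛ^ε(z,w) := (256εz + 96izw + 64εsw² + 64z³ + 64iεsz²w − 3(3ε−16s²)zw² + 4isw³, 256εz² − 16w² + 256sz³ + 16iz²w − 16εszw² − iεw³, w(256ε − 32iw + 64z² − 64iεszw − (ε+16s²)w²)) / (256ε − 32iw + 64z² − 192iεszw − (17ε+144s²)w² + 32iεz²w + 24szw² + iw³) is holomorphic on a neighborhood of 0 ∈ ℂ², maps ℍ² into ℍ³_ε near 0, and belongs to the normalized class N2^ε: it satisfies G₃,ₛ^ε(0) = 0, f₁_z(0)f₂_{z²}(0) − f₂_z(0)f₁_{z²}(0) ≠ 0, g_w(0) > 0, and the normalization conditions H_z(0) = (1,0,0), H_w(0) = (0,0,1), f₂_{z²}(0) = 2, f₂_{zw}(0) = 0, f₁_{w²}(0) real and ≥ 0, Re g_{w²}(0) = 0, Re f₂_{z²w}(0) = 0. -/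
noncomputable section

open Complex Filter

private noncomputable def pol (c0 c1 c2 c3 c4 c5 c6 : ℂ) : ℂ → ℂ := fun z =>
  c0 + c1*z + c2*z^2 + c3*z^3 + c4*z^4 + c5*z^5 + c6*z^6

private lemma pol_zero (c0 c1 c2 c3 c4 c5 c6 : ℂ) : pol c0 c1 c2 c3 c4 c5 c6 0 = c0 := by
  simp [pol]

private lemma polHD (c0 c1 c2 c3 c4 c5 c6 : ℂ) (x : ℂ) :
    HasDerivAt (pol c0 c1 c2 c3 c4 c5 c6)
      (pol c1 (2*c2) (3*c3) (4*c4) (5*c5) (6*c6) 0 x) x := by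
  have h := ((((((hasDerivAt_const x c0).add ((hasDerivAt_id x).const_mul c1)).add
      ((hasDerivAt_pow 2 x).const_mul c2)).add ((hasDerivAt_pow 3 x).const_mul c3)).add
      ((hasDerivAt_pow 4 x).const_mul c4)).add ((hasDerivAt_pow 5 x).const_mul c5)).add
      ((hasDerivAt_pow 6 x).const_mul c6)
  convert h using 1
  case e'_9 => simp [pol]; ring
  all_goals rfl

private lemma quot12 (A A' A'' B B' B'' : ℂ → ℂ)
    (hA : ∀ x, HasDerivAt A (A' x) x) (hA' : ∀ x, HasDerivAt A' (A'' x) x)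
    (hB : ∀ x, HasDerivAt B (B' x) x) (hB' : ∀ x, HasDerivAt B' (B'' x) x)
    (hB0 : B 0 ≠ 0) :
    deriv (fun x => A x / B x) 0 = (A' 0 * B 0 - A 0 * B' 0) / B 0 ^ 2 ∧
    deriv (deriv (fun x => A x / B x)) 0 =
      ((A'' 0 * B 0 - A 0 * B'' 0) * B 0 ^ 2 -
        (A' 0 * B 0 - A 0 * B' 0) * (2 * B 0 * B' 0)) / (B 0 ^ 2) ^ 2 := by
  have hBc : Continuous B := by
    have : Differentiable ℂ B := fun x => (hB x).differentiableAt
    exact this.continuous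
  have hopen : IsOpen {x : ℂ | B x ≠ 0} := isOpen_compl_singleton.preimage hBc
  have hmem : {x : ℂ | B x ≠ 0} ∈ nhds (0:ℂ) := hopen.mem_nhds hB0
  have key : ∀ x : ℂ, B x ≠ 0 →
      deriv (fun y => A y / B y) x = (A' x * B x - A x * B' x) / B x ^ 2 :=
    fun x hx => ((hA x).div (hB x) hx).deriv
  refine ⟨key 0 hB0, ?_⟩
  have heq : deriv (fun y => A y / B y) =ᶠ[nhds (0:ℂ)]
      fun x => (A' x * B x - A x * B' x) / B x ^ 2 :=
    Filter.eventuallyEq_of_mem hmem (fun x hx => key x hx)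
  rw [heq.deriv_eq]
  have hC : HasDerivAt (fun x => A' x * B x - A x * B' x)
      (A'' 0 * B 0 + A' 0 * B' 0 - (A' 0 * B' 0 + A 0 * B'' 0)) 0 :=
    ((hA' 0).mul (hB 0)).sub ((hA 0).mul (hB' 0))
  have hB2 : HasDerivAt (fun x => B x ^ 2) ((2:ℕ) * B 0 ^ (2-1) * B' 0) 0 := (hB 0).pow 2
  erw [(hC.div hB2 (pow_ne_zero 2 hB0)).deriv]
  push_cast
  ring

private lemma quotP (a0 a1 a2 a3 a4 a5 a6 b0 b1 b2 b3 b4 b5 b6 : ℂ) (hb : b0 ≠ 0) :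
    deriv (fun x => pol a0 a1 a2 a3 a4 a5 a6 x / pol b0 b1 b2 b3 b4 b5 b6 x) 0
      = (a1 * b0 - a0 * b1) / b0 ^ 2 ∧
    deriv (deriv (fun x => pol a0 a1 a2 a3 a4 a5 a6 x / pol b0 b1 b2 b3 b4 b5 b6 x)) 0
      = ((2*a2 * b0 - a0 * (2*b2)) * b0 ^ 2 -
          (a1 * b0 - a0 * b1) * (2 * b0 * b1)) / (b0 ^ 2) ^ 2 := by
  have h := quot12 (pol a0 a1 a2 a3 a4 a5 a6) _ _ (pol b0 b1 b2 b3 b4 b5 b6) _ _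
      (polHD a0 a1 a2 a3 a4 a5 a6) (polHD a1 (2*a2) (3*a3) (4*a4) (5*a5) (6*a6) 0)
      (polHD b0 b1 b2 b3 b4 b5 b6) (polHD b1 (2*b2) (3*b3) (4*b4) (5*b5) (6*b6) 0)
      (by simpa [pol_zero] using hb)
  simpa [pol_zero] using h

private lemma keyIdentity (e t z cz w : ℂ) (he2 : e^2 = 1) :
    (w*(256*e - 32*Complex.I*w + 64*z^2 - 64*Complex.I*e*t*z*w - (e+16*t^2)*w^2)) *
      (256*e + 32*Complex.I*(w - 2*Complex.I*(z*cz)) + 64*cz^2 + 192*Complex.I*e*t*cz*(w - 2*Complex.I*(z*cz)) - (17*e+144*t^2)*(w - 2*Complex.I*(z*cz))^2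
        - 32*Complex.I*e*cz^2*(w - 2*Complex.I*(z*cz)) + 24*t*cz*(w - 2*Complex.I*(z*cz))^2 - Complex.I*(w - 2*Complex.I*(z*cz))^3)
    - ((w - 2*Complex.I*(z*cz))*(256*e + 32*Complex.I*(w - 2*Complex.I*(z*cz)) + 64*cz^2 + 64*Complex.I*e*t*cz*(w - 2*Complex.I*(z*cz)) - (e+16*t^2)*(w - 2*Complex.I*(z*cz))^2)) *
      (256*e - 32*Complex.I*w + 64*z^2 - 192*Complex.I*e*t*z*w - (17*e+144*t^2)*w^2
        + 32*Complex.I*e*z^2*w + 24*t*z*w^2 + Complex.I*w^3)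
    = 2*Complex.I*(
      (256*e*z + 96*Complex.I*z*w + 64*e*t*w^2 + 64*z^3 + 64*Complex.I*e*t*z^2*w
          - 3*(3*e - 16*t^2)*z*w^2 + 4*Complex.I*t*w^3) *
      (256*e*cz - 96*Complex.I*cz*(w - 2*Complex.I*(z*cz)) + 64*e*t*(w - 2*Complex.I*(z*cz))^2 + 64*cz^3 - 64*Complex.I*e*t*cz^2*(w - 2*Complex.I*(z*cz))
          - 3*(3*e - 16*t^2)*cz*(w - 2*Complex.I*(z*cz))^2 - 4*Complex.I*t*(w - 2*Complex.I*(z*cz))^3)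
      + e*((256*e*z^2 - 16*w^2 + 256*t*z^3 + 16*Complex.I*z^2*w - 16*e*t*z*w^2 - Complex.I*e*w^3) *
        (256*e*cz^2 - 16*(w - 2*Complex.I*(z*cz))^2 + 256*t*cz^3 - 16*Complex.I*cz^2*(w - 2*Complex.I*(z*cz)) - 16*e*t*cz*(w - 2*Complex.I*(z*cz))^2 + Complex.I*e*(w - 2*Complex.I*(z*cz))^3))) := by
  have hI2 : Complex.I^2 = -1 := Complex.I_sq
  linear_combination (-8192*w^4*t^2*Complex.I + -2*w^6*e*Complex.I + 1536*cz*w^4*t*Complex.I + 32*cz*w^5*t*e + -512*cz^2*w^3*e + -8192*cz^2*w^3*t^2 + 64*cz^2*w^4*Complex.I + -512*cz^3*w^3*t + 1536*z*w^4*t*Complex.I + -32*z*w^5*t*e + 16384*z*cz*w^2*Complex.I + -32768*z*cz*w^3*t^2 + -64*z*cz*w^4*Complex.I + -512*z*cz*w^4*t^2*e*Complex.I + -12*z*cz*w^5*e + 8192*z*cz^2*w^2*t*e*Complex.I + 6144*z*cz^2*w^3*t + -128*z*cz^2*w^4*t*e*Complex.I + -16384*z*cz^3*w + 24576*z*cz^3*w^2*t^2*Complex.I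 + 128*z*cz^3*w^3 + 512*z^2*w^3*e + 8192*z^2*w^3*t^2 + 64*z^2*w^4*Complex.I + 8192*z^2*cz*w^2*t*e*Complex.I + 6144*z^2*cz*w^3*t + 192*z^2*cz*w^4*t*e*Complex.I + -131072*z^2*cz^2*e*Complex.I + 32768*z^2*cz^2*w + 49152*z^2*cz^2*w^2*t^2*Complex.I + -256*z^2*cz^2*w^3 + -2048*z^2*cz^2*w^3*t^2*e + 24*z^2*cz^2*w^4*e*Complex.I + -6144*z^2*cz^3*w^2*t*Complex.I + -128*z^2*cz^3*w^3*t*e + 512*z^3*w^3*t + 16384*z^3*cz*w + -3072*z^3*cz*w^2*e*Complex.I + -24576*z^3*cz*w^2*t^2*Complex.I + 384*z^3*cz*w^3 + 32768*z^3*cz^2*w*t*e + -6144*z^3*cz^2*w^2*t*Complex.I + 384*z^3*cz^2*w^3*t*e + 32768*z^3*cz^3*w*t^2 + 256*z^3*cz^3*w^2*Complex.I + 2048*z^3*cz^3*w^2*t^2*e*Complex.I + 16*z^3*cz^3*w^3*e + -3072*z^4*cz*w^2*t*Complex.I + -32768*z^4*cz^2*Complex.I + -6144*z^4*cz^2*w*e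 + -768*z^4*cz^2*w^2*Complex.I + -32768*z^4*cz^3*t*e*Complex.I + -256*z^4*cz^3*w^2*t*e*Complex.I + -6144*z^5*cz^2*w*t + 4096*z^5*cz^3*e*Complex.I + -32768*z^5*cz^3*t^2*Complex.I + -512*z^5*cz^3*w + 4096*z^6*cz^3*t*Complex.I) * he2 + (2*w^6*e^3*Complex.I + 32*w^6*t^2*Complex.I + 6144*cz*w^3*t*e + 768*cz*w^4*t*Complex.I + 8*cz*w^5*t*e + -32*cz*w^5*t*e^3 + -384*cz*w^5*t^3 + 512*cz^2*w^3*e + 512*cz^2*w^3*e^3 + 8192*cz^2*w^3*t^2*e^2 + -32*cz^2*w^4*e^2*Complex.I + 512*cz^2*w^4*t^2*e*Complex.I + -512*cz^3*w^3*t + 512*cz^3*w^3*t*e^2 + -6144*z*w^3*t*e + 768*z*w^4*t*Complex.I + -8*z*w^5*t*e + 32*z*w^5*t*e^3 + 384*z*w^5*t^3 + 16384*z*cz*w^2*Complex.I + -32768*z*cz*w^3*t^2 + 32768*z*cz*w^3*t^2*e^2 + -64*z*cz*w^4*Complex.I + -64*z*cz*w^4*e^2*Complex.I + -1024*z*cz*w^4*t^2*e*Complex.I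 + -12*z*cz*w^5*e + 12*z*cz*w^5*e^3 + -12*z*cz*w^5*e^3*Complex.I^2 + -192*z*cz*w^5*t^2*Complex.I^2 + -8192*z*cz^2*w^2*t*e*Complex.I + 4608*z*cz^2*w^3*t + -1536*z*cz^2*w^3*t*Complex.I^2 + -6144*z*cz^2*w^3*t*e^2 + -32*z*cz^2*w^4*t*e*Complex.I + 128*z*cz^2*w^4*t*e^3*Complex.I + 1536*z*cz^2*w^4*t^3*Complex.I + -16384*z*cz^3*w + 16384*z*cz^3*w*e^2 + -1024*z*cz^3*w^2*e*Complex.I + -16384*z*cz^3*w^2*t^2*e^2*Complex.I + 128*z*cz^3*w^3 + -128*z*cz^3*w^3*e^2 + 64*z*cz^3*w^3*e^2*Complex.I^2 + -1024*z*cz^3*w^3*t^2*e*Complex.I^2 + -512*z^2*w^3*e + -512*z^2*w^3*e^3 + -8192*z^2*w^3*t^2*e^2 + -32*z^2*w^4*e^2*Complex.I + 512*z^2*w^4*t^2*e*Complex.I + 28672*z^2*cz*w^2*t*e*Complex.I + 7680*z^2*cz*w^3*t + -4608*z^2*cz*w^3*t*Complex.I^2 + -6144*z^2*cz*w^3*t*e^2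 + 48*z^2*cz*w^4*t*e*Complex.I + -192*z^2*cz*w^4*t*e^3*Complex.I + -2304*z^2*cz*w^4*t^3*Complex.I + -131072*z^2*cz^2*e*Complex.I + 32768*z^2*cz^2*w + -32768*z^2*cz^2*w*Complex.I^2 + -32768*z^2*cz^2*w*e^2 + -4096*z^2*cz^2*w^2*e*Complex.I + 49152*z^2*cz^2*w^2*t^2*Complex.I + -49152*z^2*cz^2*w^2*t^2*e^2*Complex.I + -256*z^2*cz^2*w^3 + 256*z^2*cz^2*w^3*Complex.I^2 + 256*z^2*cz^2*w^3*e^2 + 256*z^2*cz^2*w^3*e^2*Complex.I^2 + -2048*z^2*cz^2*w^3*t^2*e + 4096*z^2*cz^2*w^3*t^2*e*Complex.I^2 + 2048*z^2*cz^2*w^3*t^2*e^3 + 24*z^2*cz^2*w^4*e*Complex.I + -24*z^2*cz^2*w^4*e^3*Complex.I + 24*z^2*cz^2*w^4*e^3*Complex.I^3 + 384*z^2*cz^2*w^4*t^2*Complex.I^3 + -131072*z^2*cz^3*t*e^2*Complex.I + -16384*z^2*cz^3*w*t*e*Complex.I^2 + -3072*z^2*cz^3*w^2*t*Complex.I + 6144*z^2*cz^3*w^2*t*e^2*Complex.I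 + -128*z^2*cz^3*w^3*t*e + 32*z^2*cz^3*w^3*t*e*Complex.I^2 + 128*z^2*cz^3*w^3*t*e^3 + -128*z^2*cz^3*w^3*t*e^3*Complex.I^2 + -1536*z^2*cz^3*w^3*t^3*Complex.I^2 + 512*z^3*w^3*t + -512*z^3*w^3*t*e^2 + 16384*z^3*cz*w + -16384*z^3*cz*w*e^2 + 2048*z^3*cz*w^2*e*Complex.I + 3072*z^3*cz*w^2*e^3*Complex.I + 32768*z^3*cz*w^2*t^2*e^2*Complex.I + 384*z^3*cz*w^3 + -384*z^3*cz*w^3*e^2 + 192*z^3*cz*w^3*e^2*Complex.I^2 + -3072*z^3*cz*w^3*t^2*e*Complex.I^2 + -131072*z^3*cz^2*t*e^2*Complex.I + 32768*z^3*cz^2*w*t*e + -24576*z^3*cz^2*w*t*e*Complex.I^2 + -32768*z^3*cz^2*w*t*e^3 + -12288*z^3*cz^2*w^2*t*Complex.I + 9216*z^3*cz^2*w^2*t*Complex.I^3 + 6144*z^3*cz^2*w^2*t*e^2*Complex.I + 384*z^3*cz^2*w^3*t*e + -96*z^3*cz^2*w^3*t*e*Complex.I^2 + -384*z^3*cz^2*w^3*t*e^3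 + 384*z^3*cz^2*w^3*t*e^3*Complex.I^2 + 4608*z^3*cz^2*w^3*t^3*Complex.I^2 + -131072*z^3*cz^3*t^2*e*Complex.I + 8192*z^3*cz^3*w*e*Complex.I^2 + 32768*z^3*cz^3*w*t^2 + -32768*z^3*cz^3*w*t^2*Complex.I^2 + -32768*z^3*cz^3*w*t^2*e^2 + 32768*z^3*cz^3*w*t^2*e^2*Complex.I^2 + 256*z^3*cz^3*w^2*Complex.I + -256*z^3*cz^3*w^2*Complex.I^3 + -256*z^3*cz^3*w^2*e^2*Complex.I + -256*z^3*cz^3*w^2*e^2*Complex.I^3 + 2048*z^3*cz^3*w^2*t^2*e*Complex.I + -4096*z^3*cz^3*w^2*t^2*e*Complex.I^3 + -2048*z^3*cz^3*w^2*t^2*e^3*Complex.I + 16*z^3*cz^3*w^3*e + -16*z^3*cz^3*w^3*e*Complex.I^2 + -16*z^3*cz^3*w^3*e^3 + 16*z^3*cz^3*w^3*e^3*Complex.I^2 + -16*z^3*cz^3*w^3*e^3*Complex.I^4 + -256*z^3*cz^3*w^3*t^2*Complex.I^4 + -3072*z^4*cz*w^2*t*Complex.I + 3072*z^4*cz*w^2*t*e^2*Complex.I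 + -32768*z^4*cz^2*Complex.I + 32768*z^4*cz^2*e^2*Complex.I + -6144*z^4*cz^2*w*e + -2048*z^4*cz^2*w*e*Complex.I^2 + 6144*z^4*cz^2*w*e^3 + -6144*z^4*cz^2*w*e^3*Complex.I^2 + -32768*z^4*cz^2*w*t^2*e^2*Complex.I^2 + -768*z^4*cz^2*w^2*Complex.I + 768*z^4*cz^2*w^2*e^2*Complex.I + -384*z^4*cz^2*w^2*e^2*Complex.I^3 + 6144*z^4*cz^2*w^2*t^2*e*Complex.I^3 + -32768*z^4*cz^3*t*e*Complex.I + -16384*z^4*cz^3*t*e*Complex.I^3 + 32768*z^4*cz^3*t*e^3*Complex.I + 6144*z^4*cz^3*w*t*Complex.I^2 + -6144*z^4*cz^3*w*t*Complex.I^4 + -256*z^4*cz^3*w^2*t*e*Complex.I + 64*z^4*cz^3*w^2*t*e*Complex.I^3 + 256*z^4*cz^3*w^2*t*e^3*Complex.I + -256*z^4*cz^3*w^2*t*e^3*Complex.I^3 + -3072*z^4*cz^3*w^2*t^3*Complex.I^3 + -6144*z^5*cz^2*w*t + 6144*z^5*cz^2*w*t*Complex.I^2 + 6144*z^5*cz^2*w*t*e^2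 + -6144*z^5*cz^2*w*t*e^2*Complex.I^2 + 4096*z^5*cz^3*e*Complex.I + -4096*z^5*cz^3*e^3*Complex.I + 4096*z^5*cz^3*e^3*Complex.I^3 + -32768*z^5*cz^3*t^2*Complex.I + 32768*z^5*cz^3*t^2*e^2*Complex.I + -512*z^5*cz^3*w + 512*z^5*cz^3*w*Complex.I^2 + 512*z^5*cz^3*w*e^2 + -512*z^5*cz^3*w*e^2*Complex.I^2 + 256*z^5*cz^3*w*e^2*Complex.I^4 + -4096*z^5*cz^3*w*t^2*e*Complex.I^4 + 4096*z^6*cz^3*t*Complex.I + -4096*z^6*cz^3*t*Complex.I^3 + -4096*z^6*cz^3*t*e^2*Complex.I + 4096*z^6*cz^3*t*e^2*Complex.I^3) * hI2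

set_option maxHeartbeats 2000000 in
/-- For every s ≥ 0 the map G₃,ₛ^ε is holomorphic near 0, maps ℍ² into ℍ³_ε near 0, belongs
to the class F2^ε and satisfies all normalization conditions of the class N2^ε. -/
theorem stmt_9 (ε : ℝ) (hε : ε = 1 ∨ ε = -1) (s : ℝ) (hs : 0 ≤ s) :
    ∃ U : Set (ℂ × ℂ),
      F2Mem ε (fun p => (G3 ε s p).1) (fun p => (G3 ε s p).2.1) (fun p => (G3 ε s p).2.2) U ∧
      F2Norm (fun p => (G3 ε s p).1) (fun p => (G3 ε s p).2.1) (fun p => (G3 ε s p).2.2) := by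
  have hε0 : ε ≠ 0 := by rcases hε with rfl | rfl <;> norm_num
  have he0 : (ε : ℂ) ≠ 0 := Complex.ofReal_ne_zero.mpr hε0
  have he2 : (ε : ℂ) ^ 2 = 1 := by
    rcases hε with rfl | rfl <;> norm_num
  have hb0 : (256 : ℂ) * (ε : ℂ) ≠ 0 := mul_ne_zero (by norm_num) he0
  have hq0 : (65536 : ℂ) * (ε : ℂ) ^ 2 ≠ 0 := mul_ne_zero (by norm_num) (pow_ne_zero 2 he0)
  -- the domain
  have hcont : Continuous (G3den ε s) := by unfold G3den; fun_prop
  have hSopen : IsOpen {p : ℂ × ℂ | G3den ε s p ≠ 0} :=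
    isOpen_compl_singleton.preimage hcont
  have h00S : ((0 : ℂ), (0 : ℂ)) ∈ {p : ℂ × ℂ | G3den ε s p ≠ 0} := by
    simp only [Set.mem_setOf_eq, G3den]
    simpa using hb0
  set U : Set (ℂ × ℂ) := connectedComponentIn {p : ℂ × ℂ | G3den ε s p ≠ 0} ((0:ℂ), (0:ℂ))
    with hU
  have hUsub : U ⊆ {p : ℂ × ℂ | G3den ε s p ≠ 0} := connectedComponentIn_subset _ _
  -- first derivatives along z at 0
  have hfun1 : (fun z : ℂ => (G3 ε s (z, 0)).1)
      = fun z => pol 0 (256*(ε:ℂ)) 0 64 0 0 0 z / pol (256*(ε:ℂ)) 0 64 0 0 0 0 z := by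
    funext x; simp only [G3, G3den, pol]; ring
  have hfun2 : (fun z : ℂ => (G3 ε s (z, 0)).2.1)
      = fun z => pol 0 0 (256*(ε:ℂ)) (256*(s:ℂ)) 0 0 0 z / pol (256*(ε:ℂ)) 0 64 0 0 0 0 z := by
    funext x; simp only [G3, G3den, pol]; ring
  have hfun3 : (fun z : ℂ => (G3 ε s (z, 0)).2.2)
      = fun z => pol 0 0 0 0 0 0 0 z / pol (256*(ε:ℂ)) 0 64 0 0 0 0 z := by
    funext x; simp only [G3, G3den, pol]; ring
  -- functions of w at z = 0
  have hgun1 : (fun w : ℂ => (G3 ε s (0, w)).1)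
      = fun w => pol 0 0 (64*(ε:ℂ)*(s:ℂ)) (4*Complex.I*(s:ℂ)) 0 0 0 w /
          pol (256*(ε:ℂ)) (-(32*Complex.I)) (-(17*(ε:ℂ)+144*(s:ℂ)^2)) Complex.I 0 0 0 w := by
    funext x; simp only [G3, G3den, pol]; ring
  have hgun2 : (fun w : ℂ => (G3 ε s (0, w)).2.1)
      = fun w => pol 0 0 (-16) (-(Complex.I*(ε:ℂ))) 0 0 0 w /
          pol (256*(ε:ℂ)) (-(32*Complex.I)) (-(17*(ε:ℂ)+144*(s:ℂ)^2)) Complex.I 0 0 0 w := by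
    funext x; simp only [G3, G3den, pol]; ring
  have hgun3 : (fun w : ℂ => (G3 ε s (0, w)).2.2)
      = fun w => pol 0 (256*(ε:ℂ)) (-(32*Complex.I)) (-((ε:ℂ)+16*(s:ℂ)^2)) 0 0 0 w /
          pol (256*(ε:ℂ)) (-(32*Complex.I)) (-(17*(ε:ℂ)+144*(s:ℂ)^2)) Complex.I 0 0 0 w := by
    funext x; simp only [G3, G3den, pol]; ring
  -- pz values
  have hpz1 : pz (fun p => (G3 ε s p).1) ((0:ℂ), (0:ℂ)) = 1 := by
    show deriv (fun z : ℂ => (G3 ε s (z, 0)).1) 0 = 1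
    rw [hfun1, (quotP 0 (256*(ε:ℂ)) 0 64 0 0 0 (256*(ε:ℂ)) 0 64 0 0 0 0 hb0).1]
    field_simp
    ring
  have hpz2 : pz (fun p => (G3 ε s p).2.1) ((0:ℂ), (0:ℂ)) = 0 := by
    show deriv (fun z : ℂ => (G3 ε s (z, 0)).2.1) 0 = 0
    rw [hfun2, (quotP 0 0 (256*(ε:ℂ)) (256*(s:ℂ)) 0 0 0 (256*(ε:ℂ)) 0 64 0 0 0 0 hb0).1]
    ring
  have hpz3 : pz (fun p => (G3 ε s p).2.2) ((0:ℂ), (0:ℂ)) = 0 := by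
    show deriv (fun z : ℂ => (G3 ε s (z, 0)).2.2) 0 = 0
    rw [hfun3, (quotP 0 0 0 0 0 0 0 (256*(ε:ℂ)) 0 64 0 0 0 0 hb0).1]
    ring
  have hpzz2 : pz (pz (fun p => (G3 ε s p).2.1)) ((0:ℂ), (0:ℂ)) = 2 := by
    show deriv (deriv (fun z : ℂ => (G3 ε s (z, 0)).2.1)) 0 = 2
    rw [hfun2, (quotP 0 0 (256*(ε:ℂ)) (256*(s:ℂ)) 0 0 0 (256*(ε:ℂ)) 0 64 0 0 0 0 hb0).2]
    field_simp
    ring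
  -- pw values
  have hpw1 : pw (fun p => (G3 ε s p).1) ((0:ℂ), (0:ℂ)) = 0 := by
    show deriv (fun w : ℂ => (G3 ε s (0, w)).1) 0 = 0
    rw [hgun1, (quotP 0 0 (64*(ε:ℂ)*(s:ℂ)) (4*Complex.I*(s:ℂ)) 0 0 0 (256*(ε:ℂ)) (-(32*Complex.I))
      (-(17*(ε:ℂ)+144*(s:ℂ)^2)) Complex.I 0 0 0 hb0).1]
    ring
  have hpw2 : pw (fun p => (G3 ε s p).2.1) ((0:ℂ), (0:ℂ)) = 0 := by
    show deriv (fun w : ℂ => (G3 ε s (0, w)).2.1) 0 = 0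
    rw [hgun2, (quotP 0 0 (-16) (-(Complex.I*(ε:ℂ))) 0 0 0 (256*(ε:ℂ)) (-(32*Complex.I))
      (-(17*(ε:ℂ)+144*(s:ℂ)^2)) Complex.I 0 0 0 hb0).1]
    ring
  have hpw3 : pw (fun p => (G3 ε s p).2.2) ((0:ℂ), (0:ℂ)) = 1 := by
    show deriv (fun w : ℂ => (G3 ε s (0, w)).2.2) 0 = 1
    rw [hgun3, (quotP 0 (256*(ε:ℂ)) (-(32*Complex.I)) (-((ε:ℂ)+16*(s:ℂ)^2)) 0 0 0
      (256*(ε:ℂ)) (-(32*Complex.I)) (-(17*(ε:ℂ)+144*(s:ℂ)^2)) Complex.I 0 0 0 hb0).1]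
    field_simp
    ring
  have hpww1 : pw (pw (fun p => (G3 ε s p).1)) ((0:ℂ), (0:ℂ)) = ((s / 2 : ℝ) : ℂ) := by
    show deriv (deriv (fun w : ℂ => (G3 ε s (0, w)).1)) 0 = ((s / 2 : ℝ) : ℂ)
    rw [hgun1, (quotP 0 0 (64*(ε:ℂ)*(s:ℂ)) (4*Complex.I*(s:ℂ)) 0 0 0 (256*(ε:ℂ)) (-(32*Complex.I))
      (-(17*(ε:ℂ)+144*(s:ℂ)^2)) Complex.I 0 0 0 hb0).2]
    push_cast
    field_simp
    ring
  have hpww3 : pw (pw (fun p => (G3 ε s p).2.2)) ((0:ℂ), (0:ℂ)) = 0 := by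
    show deriv (deriv (fun w : ℂ => (G3 ε s (0, w)).2.2)) 0 = 0
    rw [hgun3, (quotP 0 (256*(ε:ℂ)) (-(32*Complex.I)) (-((ε:ℂ)+16*(s:ℂ)^2)) 0 0 0
      (256*(ε:ℂ)) (-(32*Complex.I)) (-(17*(ε:ℂ)+144*(s:ℂ)^2)) Complex.I 0 0 0 hb0).2]
    ring
  -- mixed derivatives: pw f₂ along the z-axis
  have hS0 : {x : ℂ | 256*(ε:ℂ) + 64*x^2 ≠ 0} ∈ nhds (0:ℂ) := by
    have hc : Continuous fun x : ℂ => 256*(ε:ℂ) + 64*x^2 := by fun_prop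
    have ho : IsOpen {x : ℂ | 256*(ε:ℂ) + 64*x^2 ≠ 0} := isOpen_compl_singleton.preimage hc
    refine ho.mem_nhds ?_
    simpa using hb0
  have hpsi : (fun z : ℂ => pw (fun p => (G3 ε s p).2.1) (z, 0)) =ᶠ[nhds (0:ℂ)]
      fun z => pol 0 0 (12288*Complex.I*(ε:ℂ))
          (49152*Complex.I*(ε:ℂ)^2*(s:ℂ) + 8192*Complex.I*(s:ℂ))
          (1024*Complex.I - 8192*Complex.I*(ε:ℂ)^2 + 49152*Complex.I*(ε:ℂ)*(s:ℂ)^2)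
          (-(8192*Complex.I*(ε:ℂ)*(s:ℂ))) 0 z /
        pol (65536*(ε:ℂ)^2) 0 (32768*(ε:ℂ)) 0 4096 0 0 z := by
    refine Filter.eventuallyEq_of_mem hS0 (fun x hx => ?_)
    have hx' : (256*(ε:ℂ) + 64*x^2) ≠ 0 := hx
    have hfw : (fun w : ℂ => (G3 ε s (x, w)).2.1)
        = fun w => pol (256*(ε:ℂ)*x^2 + 256*(s:ℂ)*x^3) (16*Complex.I*x^2)
            (-16 - 16*(ε:ℂ)*(s:ℂ)*x) (-(Complex.I*(ε:ℂ))) 0 0 0 w /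
          pol (256*(ε:ℂ) + 64*x^2)
            (-(32*Complex.I) - 192*Complex.I*(ε:ℂ)*(s:ℂ)*x + 32*Complex.I*(ε:ℂ)*x^2)
            (-(17*(ε:ℂ) + 144*(s:ℂ)^2) + 24*(s:ℂ)*x) Complex.I 0 0 0 w := by
      funext y; simp only [G3, G3den, pol]; ring
    show deriv (fun w : ℂ => (G3 ε s (x, w)).2.1) 0 = _
    rw [hfw, (quotP (256*(ε:ℂ)*x^2 + 256*(s:ℂ)*x^3) (16*Complex.I*x^2)
      (-16 - 16*(ε:ℂ)*(s:ℂ)*x) (-(Complex.I*(ε:ℂ))) 0 0 0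
      (256*(ε:ℂ) + 64*x^2)
      (-(32*Complex.I) - 192*Complex.I*(ε:ℂ)*(s:ℂ)*x + 32*Complex.I*(ε:ℂ)*x^2)
      (-(17*(ε:ℂ) + 144*(s:ℂ)^2) + 24*(s:ℂ)*x) Complex.I 0 0 0 hx').1]
    rw [div_eq_div_iff (pow_ne_zero 2 hx') ?hq]
    case hq =>
      have : pol (65536*(ε:ℂ)^2) 0 (32768*(ε:ℂ)) 0 4096 0 0 x = (256*(ε:ℂ) + 64*x^2)^2 := by
        simp only [pol]; ring
      rw [this]
      exact pow_ne_zero 2 hx'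
    simp only [pol]
    ring
  have hfzw : pz (pw (fun p => (G3 ε s p).2.1)) ((0:ℂ), (0:ℂ)) = 0 := by
    show deriv (fun z : ℂ => pw (fun p => (G3 ε s p).2.1) (z, 0)) 0 = 0
    rw [hpsi.deriv_eq, (quotP 0 0 (12288*Complex.I*(ε:ℂ))
      (49152*Complex.I*(ε:ℂ)^2*(s:ℂ) + 8192*Complex.I*(s:ℂ))
      (1024*Complex.I - 8192*Complex.I*(ε:ℂ)^2 + 49152*Complex.I*(ε:ℂ)*(s:ℂ)^2)
      (-(8192*Complex.I*(ε:ℂ)*(s:ℂ))) 0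
      (65536*(ε:ℂ)^2) 0 (32768*(ε:ℂ)) 0 4096 0 0 hq0).1]
    ring
  have hfzzw : (pz (pz (pw (fun p => (G3 ε s p).2.1))) ((0:ℂ), (0:ℂ))).re = 0 := by
    have h0 : pz (pz (pw (fun p => (G3 ε s p).2.1))) ((0:ℂ), (0:ℂ))
        = deriv (deriv (fun z : ℂ => pw (fun p => (G3 ε s p).2.1) (z, 0))) 0 := rfl
    rw [h0, (hpsi.deriv).deriv_eq, (quotP 0 0 (12288*Complex.I*(ε:ℂ))
      (49152*Complex.I*(ε:ℂ)^2*(s:ℂ) + 8192*Complex.I*(s:ℂ))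
      (1024*Complex.I - 8192*Complex.I*(ε:ℂ)^2 + 49152*Complex.I*(ε:ℂ)*(s:ℂ)^2)
      (-(8192*Complex.I*(ε:ℂ)*(s:ℂ))) 0
      (65536*(ε:ℂ)^2) 0 (32768*(ε:ℂ)) 0 4096 0 0 hq0).2]
    have hval : ((2*(12288*Complex.I*(ε:ℂ)) * (65536*(ε:ℂ)^2) - 0 * (2*(32768*(ε:ℂ))))
          * (65536*(ε:ℂ)^2) ^ 2 -
        (0 * (65536*(ε:ℂ)^2) - 0 * 0) * (2 * (65536*(ε:ℂ)^2) * 0)) / ((65536*(ε:ℂ)^2) ^ 2) ^ 2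
        = ((24576 / (65536 * ε) : ℝ) : ℂ) * Complex.I := by
      push_cast
      field_simp
      ring
    rw [hval, Complex.mul_re, Complex.I_re, Complex.I_im, Complex.ofReal_re, Complex.ofReal_im]
    ring
  -- the defining identity on the Heisenberg hypersurface
  have hmap : ∀ p ∈ U, p ∈ heis2 →
      ((fun p => (G3 ε s p).1) p, (fun p => (G3 ε s p).2.1) p, (fun p => (G3 ε s p).2.2) p)
        ∈ heis3 ε := by
    rintro ⟨z, w⟩ hpU hph
    have hD : G3den ε s (z, w) ≠ 0 := hUsub hpU
    have hDc : (starRingEnd ℂ) (G3den ε s (z, w)) ≠ 0 := by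
      intro h
      exact hD (by simpa using congrArg (starRingEnd ℂ) h)
    simp only [heis2, Set.mem_setOf_eq] at hph
    rw [Complex.sq_norm] at hph
    have hcw : (starRingEnd ℂ) w = w - 2*Complex.I*(z*(starRingEnd ℂ) z) := by
      have h1 := Complex.sub_conj w
      have h2 : ((w.im : ℝ) : ℂ) = z * (starRingEnd ℂ) z := by
        rw [hph, Complex.mul_conj]
      push_cast at h1
      linear_combination -h1 - 2*Complex.I*h2
    have hkey := keyIdentity (ε:ℂ) (s:ℂ) z ((starRingEnd ℂ) z) w he2
    rw [← hcw] at hkey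
    have hconjD : (starRingEnd ℂ) (G3den ε s (z, w)) = (256*(ε:ℂ) + 32*Complex.I*((starRingEnd ℂ) w) + 64*((starRingEnd ℂ) z)^2 + 192*Complex.I*(ε:ℂ)*(s:ℂ)*((starRingEnd ℂ) z)*((starRingEnd ℂ) w) - (17*(ε:ℂ)+144*(s:ℂ)^2)*((starRingEnd ℂ) w)^2 - 32*Complex.I*(ε:ℂ)*((starRingEnd ℂ) z)^2*((starRingEnd ℂ) w) + 24*(s:ℂ)*((starRingEnd ℂ) z)*((starRingEnd ℂ) w)^2 - Complex.I*((starRingEnd ℂ) w)^3) := by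
      simp only [G3den, map_add, map_sub, map_mul, map_pow, map_ofNat,
        Complex.conj_I, Complex.conj_ofReal]
      ring
    have hconjNG : (starRingEnd ℂ) (w * (256 * (ε:ℂ) - 32 * Complex.I * w + 64 * z ^ 2 - 64 * Complex.I * (ε:ℂ) * (s:ℂ) * z * w - ((ε:ℂ) + 16 * (s:ℂ) ^ 2) * w ^ 2)) = (((starRingEnd ℂ) w)*(256*(ε:ℂ) + 32*Complex.I*((starRingEnd ℂ) w) + 64*((starRingEnd ℂ) z)^2 + 64*Complex.I*(ε:ℂ)*(s:ℂ)*((starRingEnd ℂ) z)*((starRingEnd ℂ) w) - ((ε:ℂ) + 16*(s:ℂ)^2)*((starRingEnd ℂ) w)^2)) := by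
      simp only [map_add, map_sub, map_mul, map_pow, map_ofNat,
        Complex.conj_I, Complex.conj_ofReal]
      ring
    have hconjN1 : (starRingEnd ℂ) (256 * (ε:ℂ) * z + 96 * Complex.I * z * w + 64 * (ε:ℂ) * (s:ℂ) * w ^ 2 + 64 * z ^ 3 + 64 * Complex.I * (ε:ℂ) * (s:ℂ) * z ^ 2 * w - 3 * (3 * (ε:ℂ) - 16 * (s:ℂ) ^ 2) * z * w ^ 2 + 4 * Complex.I * (s:ℂ) * w ^ 3) = (256*(ε:ℂ)*((starRingEnd ℂ) z) - 96*Complex.I*((starRingEnd ℂ) z)*((starRingEnd ℂ) w) + 64*(ε:ℂ)*(s:ℂ)*((starRingEnd ℂ) w)^2 + 64*((starRingEnd ℂ) z)^3 - 64*Complex.I*(ε:ℂ)*(s:ℂ)*((starRingEnd ℂ) z)^2*((starRingEnd ℂ) w) - 3*(3*(ε:ℂ) - 16*(s:ℂ)^2)*((starRingEnd ℂ) z)*((starRingEnd ℂ) w)^2 - 4*Complex.I*(s:ℂ)*((starRingEnd ℂ) w)^3) := by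
      simp only [map_add, map_sub, map_mul, map_pow, map_ofNat,
        Complex.conj_I, Complex.conj_ofReal]
      ring
    have hconjN2 : (starRingEnd ℂ) (256 * (ε:ℂ) * z ^ 2 - 16 * w ^ 2 + 256 * (s:ℂ) * z ^ 3 + 16 * Complex.I * z ^ 2 * w - 16 * (ε:ℂ) * (s:ℂ) * z * w ^ 2 - Complex.I * (ε:ℂ) * w ^ 3) = (256*(ε:ℂ)*((starRingEnd ℂ) z)^2 - 16*((starRingEnd ℂ) w)^2 + 256*(s:ℂ)*((starRingEnd ℂ) z)^3 - 16*Complex.I*((starRingEnd ℂ) z)^2*((starRingEnd ℂ) w) - 16*(ε:ℂ)*(s:ℂ)*((starRingEnd ℂ) z)*((starRingEnd ℂ) w)^2 + Complex.I*(ε:ℂ)*((starRingEnd ℂ) w)^3) := by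
      simp only [map_add, map_sub, map_mul, map_pow, map_ofNat,
        Complex.conj_I, Complex.conj_ofReal]
      ring
    have h2 : (starRingEnd ℂ) ((w * (256 * (ε:ℂ) - 32 * Complex.I * w + 64 * z ^ 2 - 64 * Complex.I * (ε:ℂ) * (s:ℂ) * z * w - ((ε:ℂ) + 16 * (s:ℂ) ^ 2) * w ^ 2)) * (starRingEnd ℂ) (G3den ε s (z, w))) = (((starRingEnd ℂ) w)*(256*(ε:ℂ) + 32*Complex.I*((starRingEnd ℂ) w) + 64*((starRingEnd ℂ) z)^2 + 64*Complex.I*(ε:ℂ)*(s:ℂ)*((starRingEnd ℂ) z)*((starRingEnd ℂ) w) - ((ε:ℂ) + 16*(s:ℂ)^2)*((starRingEnd ℂ) w)^2)) * (G3den ε s (z, w)) := by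
      rw [map_mul, Complex.conj_conj, hconjNG]
    have h3 : ((Complex.normSq (256 * (ε:ℂ) * z + 96 * Complex.I * z * w + 64 * (ε:ℂ) * (s:ℂ) * w ^ 2 + 64 * z ^ 3 + 64 * Complex.I * (ε:ℂ) * (s:ℂ) * z ^ 2 * w - 3 * (3 * (ε:ℂ) - 16 * (s:ℂ) ^ 2) * z * w ^ 2 + 4 * Complex.I * (s:ℂ) * w ^ 3) : ℝ) : ℂ) = (256 * (ε:ℂ) * z + 96 * Complex.I * z * w + 64 * (ε:ℂ) * (s:ℂ) * w ^ 2 + 64 * z ^ 3 + 64 * Complex.I * (ε:ℂ) * (s:ℂ) * z ^ 2 * w - 3 * (3 * (ε:ℂ) - 16 * (s:ℂ) ^ 2) * z * w ^ 2 + 4 * Complex.I * (s:ℂ) * w ^ 3) * (256*(ε:ℂ)*((starRingEnd ℂ) z) - 96*Complex.I*((starRingEnd ℂ) z)*((starRingEnd ℂ) w) + 64*(ε:ℂ)*(s:ℂ)*((starRingEnd ℂ) w)^2 + 64*((starRingEnd ℂ) z)^3 - 64*Complex.I*(ε:ℂ)*(s:ℂ)*((starRingEnd ℂ) z)^2*((starRingEnd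 ℂ) w) - 3*(3*(ε:ℂ) - 16*(s:ℂ)^2)*((starRingEnd ℂ) z)*((starRingEnd ℂ) w)^2 - 4*Complex.I*(s:ℂ)*((starRingEnd ℂ) w)^3) := by
      rw [← Complex.mul_conj, hconjN1]
    have h4 : ((Complex.normSq (256 * (ε:ℂ) * z ^ 2 - 16 * w ^ 2 + 256 * (s:ℂ) * z ^ 3 + 16 * Complex.I * z ^ 2 * w - 16 * (ε:ℂ) * (s:ℂ) * z * w ^ 2 - Complex.I * (ε:ℂ) * w ^ 3) : ℝ) : ℂ) = (256 * (ε:ℂ) * z ^ 2 - 16 * w ^ 2 + 256 * (s:ℂ) * z ^ 3 + 16 * Complex.I * z ^ 2 * w - 16 * (ε:ℂ) * (s:ℂ) * z * w ^ 2 - Complex.I * (ε:ℂ) * w ^ 3) * (256*(ε:ℂ)*((starRingEnd ℂ) z)^2 - 16*((starRingEnd ℂ) w)^2 + 256*(s:ℂ)*((starRingEnd ℂ) z)^3 - 16*Complex.I*((starRingEnd ℂ) z)^2*((starRingEnd ℂ) w) - 16*(ε:ℂ)*(s:ℂ)*((starRingEnd ℂ) z)*((starRingEnd ℂ) w)^2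 + Complex.I*(ε:ℂ)*((starRingEnd ℂ) w)^3) := by
      rw [← Complex.mul_conj, hconjN2]
    have hbig : ((2:ℂ)*Complex.I) * ((((w * (256 * (ε:ℂ) - 32 * Complex.I * w + 64 * z ^ 2 - 64 * Complex.I * (ε:ℂ) * (s:ℂ) * z * w - ((ε:ℂ) + 16 * (s:ℂ) ^ 2) * w ^ 2)) * (starRingEnd ℂ) (G3den ε s (z, w)))).im : ℂ)
        = ((2:ℂ)*Complex.I) * (((Complex.normSq (256 * (ε:ℂ) * z + 96 * Complex.I * z * w + 64 * (ε:ℂ) * (s:ℂ) * w ^ 2 + 64 * z ^ 3 + 64 * Complex.I * (ε:ℂ) * (s:ℂ) * z ^ 2 * w - 3 * (3 * (ε:ℂ) - 16 * (s:ℂ) ^ 2) * z * w ^ 2 + 4 * Complex.I * (s:ℂ) * w ^ 3) : ℝ) : ℂ)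
            + (ε:ℂ) * ((Complex.normSq (256 * (ε:ℂ) * z ^ 2 - 16 * w ^ 2 + 256 * (s:ℂ) * z ^ 3 + 16 * Complex.I * z ^ 2 * w - 16 * (ε:ℂ) * (s:ℂ) * z * w ^ 2 - Complex.I * (ε:ℂ) * w ^ 3) : ℝ) : ℂ)) := by
      calc ((2:ℂ)*Complex.I) * ((((w * (256 * (ε:ℂ) - 32 * Complex.I * w + 64 * z ^ 2 - 64 * Complex.I * (ε:ℂ) * (s:ℂ) * z * w - ((ε:ℂ) + 16 * (s:ℂ) ^ 2) * w ^ 2)) * (starRingEnd ℂ) (G3den ε s (z, w)))).im : ℂ)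
          = ((w * (256 * (ε:ℂ) - 32 * Complex.I * w + 64 * z ^ 2 - 64 * Complex.I * (ε:ℂ) * (s:ℂ) * z * w - ((ε:ℂ) + 16 * (s:ℂ) ^ 2) * w ^ 2)) * (starRingEnd ℂ) (G3den ε s (z, w))) - (starRingEnd ℂ) ((w * (256 * (ε:ℂ) - 32 * Complex.I * w + 64 * z ^ 2 - 64 * Complex.I * (ε:ℂ) * (s:ℂ) * z * w - ((ε:ℂ) + 16 * (s:ℂ) ^ 2) * w ^ 2)) * (starRingEnd ℂ) (G3den ε s (z, w))) := by
            rw [Complex.sub_conj]; push_cast; ring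
        _ = (w * (256 * (ε:ℂ) - 32 * Complex.I * w + 64 * z ^ 2 - 64 * Complex.I * (ε:ℂ) * (s:ℂ) * z * w - ((ε:ℂ) + 16 * (s:ℂ) ^ 2) * w ^ 2)) * (256*(ε:ℂ) + 32*Complex.I*((starRingEnd ℂ) w) + 64*((starRingEnd ℂ) z)^2 + 192*Complex.I*(ε:ℂ)*(s:ℂ)*((starRingEnd ℂ) z)*((starRingEnd ℂ) w) - (17*(ε:ℂ)+144*(s:ℂ)^2)*((starRingEnd ℂ) w)^2 - 32*Complex.I*(ε:ℂ)*((starRingEnd ℂ) z)^2*((starRingEnd ℂ) w) + 24*(s:ℂ)*((starRingEnd ℂ) z)*((starRingEnd ℂ) w)^2 - Complex.I*((starRingEnd ℂ) w)^3) - (((starRingEnd ℂ) w)*(256*(ε:ℂ) + 32*Complex.I*((starRingEnd ℂ) w) + 64*((starRingEnd ℂ) z)^2 + 64*Complex.I*(ε:ℂ)*(s:ℂ)*((starRingEnd ℂ) z)*((starRingEnd ℂ) w) - ((ε:ℂ) + 16*(s:ℂ)^2)*((starRingEnd ℂ) w)^2)) * (G3den ε s (z, w)) := by rw [h2, hcon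jD]
        _ = (w * (256 * (ε:ℂ) - 32 * Complex.I * w + 64 * z ^ 2 - 64 * Complex.I * (ε:ℂ) * (s:ℂ) * z * w - ((ε:ℂ) + 16 * (s:ℂ) ^ 2) * w ^ 2)) * (256*(ε:ℂ) + 32*Complex.I*((starRingEnd ℂ) w) + 64*((starRingEnd ℂ) z)^2 + 192*Complex.I*(ε:ℂ)*(s:ℂ)*((starRingEnd ℂ) z)*((starRingEnd ℂ) w) - (17*(ε:ℂ)+144*(s:ℂ)^2)*((starRingEnd ℂ) w)^2 - 32*Complex.I*(ε:ℂ)*((starRingEnd ℂ) z)^2*((starRingEnd ℂ) w) + 24*(s:ℂ)*((starRingEnd ℂ) z)*((starRingEnd ℂ) w)^2 - Complex.I*((starRingEnd ℂ) w)^3) - (((starRingEnd ℂ) w)*(256*(ε:ℂ) + 32*Complex.I*((starRingEnd ℂ) w) + 64*((starRingEnd ℂ) z)^2 + 64*Complex.I*(ε:ℂ)*(s:ℂ)*((starRingEnd ℂ) z)*((starRingEnd ℂ) w) - ((ε:ℂ) + 16*(s:ℂ)^2)*((starRingEnd ℂ) w)^2)) * (256 * (ε:ℂ) - 32 * Complex.I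 * w + 64 * z ^ 2 - 192 * Complex.I * (ε:ℂ) * (s:ℂ) * z * w - (17 * (ε:ℂ) + 144 * (s:ℂ) ^ 2) * w ^ 2 + 32 * Complex.I * (ε:ℂ) * z ^ 2 * w + 24 * (s:ℂ) * z * w ^ 2 + Complex.I * w ^ 3) := by rw [show (G3den ε s (z, w)) = (256 * (ε:ℂ) - 32 * Complex.I * w + 64 * z ^ 2 - 192 * Complex.I * (ε:ℂ) * (s:ℂ) * z * w - (17 * (ε:ℂ) + 144 * (s:ℂ) ^ 2) * w ^ 2 + 32 * Complex.I * (ε:ℂ) * z ^ 2 * w + 24 * (s:ℂ) * z * w ^ 2 + Complex.I * w ^ 3) from rfl]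
        _ = 2*Complex.I*((256 * (ε:ℂ) * z + 96 * Complex.I * z * w + 64 * (ε:ℂ) * (s:ℂ) * w ^ 2 + 64 * z ^ 3 + 64 * Complex.I * (ε:ℂ) * (s:ℂ) * z ^ 2 * w - 3 * (3 * (ε:ℂ) - 16 * (s:ℂ) ^ 2) * z * w ^ 2 + 4 * Complex.I * (s:ℂ) * w ^ 3) * (256*(ε:ℂ)*((starRingEnd ℂ) z) - 96*Complex.I*((starRingEnd ℂ) z)*((starRingEnd ℂ) w) + 64*(ε:ℂ)*(s:ℂ)*((starRingEnd ℂ) w)^2 + 64*((starRingEnd ℂ) z)^3 - 64*Complex.I*(ε:ℂ)*(s:ℂ)*((starRingEnd ℂ) z)^2*((starRingEnd ℂ) w) - 3*(3*(ε:ℂ) - 16*(s:ℂ)^2)*((starRingEnd ℂ) z)*((starRingEnd ℂ) w)^2 - 4*Complex.I*(s:ℂ)*((starRingEnd ℂ) w)^3) + (ε:ℂ)*((256 * (ε:ℂ) * z ^ 2 - 16 * w ^ 2 + 256 * (s:ℂ) * z ^ 3 + 16 * Complex.I * z ^ 2 * w - 16 * (ε:ℂ) * (s:ℂ) * z * w ^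 2 - Complex.I * (ε:ℂ) * w ^ 3) * (256*(ε:ℂ)*((starRingEnd ℂ) z)^2 - 16*((starRingEnd ℂ) w)^2 + 256*(s:ℂ)*((starRingEnd ℂ) z)^3 - 16*Complex.I*((starRingEnd ℂ) z)^2*((starRingEnd ℂ) w) - 16*(ε:ℂ)*(s:ℂ)*((starRingEnd ℂ) z)*((starRingEnd ℂ) w)^2 + Complex.I*(ε:ℂ)*((starRingEnd ℂ) w)^3))) := by linear_combination hkey
        _ = ((2:ℂ)*Complex.I) * (((Complex.normSq (256 * (ε:ℂ) * z + 96 * Complex.I * z * w + 64 * (ε:ℂ) * (s:ℂ) * w ^ 2 + 64 * z ^ 3 + 64 * Complex.I * (ε:ℂ) * (s:ℂ) * z ^ 2 * w - 3 * (3 * (ε:ℂ) - 16 * (s:ℂ) ^ 2) * z * w ^ 2 + 4 * Complex.I * (s:ℂ) * w ^ 3) : ℝ) : ℂ)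
            + (ε:ℂ) * ((Complex.normSq (256 * (ε:ℂ) * z ^ 2 - 16 * w ^ 2 + 256 * (s:ℂ) * z ^ 3 + 16 * Complex.I * z ^ 2 * w - 16 * (ε:ℂ) * (s:ℂ) * z * w ^ 2 - Complex.I * (ε:ℂ) * w ^ 3) : ℝ) : ℂ)) := by rw [h3, h4]
    have hXim : (((w * (256 * (ε:ℂ) - 32 * Complex.I * w + 64 * z ^ 2 - 64 * Complex.I * (ε:ℂ) * (s:ℂ) * z * w - ((ε:ℂ) + 16 * (s:ℂ) ^ 2) * w ^ 2)) * (starRingEnd ℂ) (G3den ε s (z, w)))).im = Complex.normSq (256 * (ε:ℂ) * z + 96 * Complex.I * z * w + 64 * (ε:ℂ) * (s:ℂ) * w ^ 2 + 64 * z ^ 3 + 64 * Complex.I * (ε:ℂ) * (s:ℂ) * z ^ 2 * w - 3 * (3 * (ε:ℂ) - 16 * (s:ℂ) ^ 2) * z * w ^ 2 + 4 * Complex.I * (s:ℂ) * w ^ 3) + ε * Complex.normSq (256 * (ε:ℂ) * z ^ 2 - 16 * w ^ 2 + 256 * (s:ℂ) * z ^ 3 + 16 * Complex.I * z ^ 2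 * w - 16 * (ε:ℂ) * (s:ℂ) * z * w ^ 2 - Complex.I * (ε:ℂ) * w ^ 3) := by
      have h5 := mul_left_cancel₀ (show ((2:ℂ)*Complex.I : ℂ) ≠ 0 by
        simp [Complex.I_ne_zero]) hbig
      exact_mod_cast h5
    simp only [heis3, Set.mem_setOf_eq, G3]
    have hquot : (w * (256 * (ε:ℂ) - 32 * Complex.I * w + 64 * z ^ 2 - 64 * Complex.I * (ε:ℂ) * (s:ℂ) * z * w - ((ε:ℂ) + 16 * (s:ℂ) ^ 2) * w ^ 2)) / (G3den ε s (z, w)) = ((w * (256 * (ε:ℂ) - 32 * Complex.I * w + 64 * z ^ 2 - 64 * Complex.I * (ε:ℂ) * (s:ℂ) * z * w - ((ε:ℂ) + 16 * (s:ℂ) ^ 2) * w ^ 2)) * (starRingEnd ℂ) (G3den ε s (z, w))) / ((Complex.normSq (G3den ε s (z, w)) : ℝ) : ℂ) := by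
      rw [← Complex.mul_conj]
      exact (mul_div_mul_right _ _ hDc).symm
    rw [hquot, Complex.div_ofReal_im, hXim, Complex.sq_norm, Complex.sq_norm, map_div₀, map_div₀]
    ring
  -- differentiability
  have hdd : Differentiable ℂ (G3den ε s) := by unfold G3den; fun_prop
  refine ⟨U, ?_, ?_⟩
  · refine ⟨hSopen.connectedComponentIn,
      isConnected_connectedComponentIn_iff.mpr h00S,
      mem_connectedComponentIn h00S, ?_, ?_, ?_, hmap,
      by simp [G3], by simp [G3], by simp [G3],
      by rw [hpz1, hpzz2, hpz2]; simp,
      by rw [hpw3]; simp,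
      by rw [hpw3]; norm_num⟩
    · simp only [G3]
      simp only [div_eq_mul_inv]
      refine DifferentiableOn.mul ?_ (DifferentiableOn.inv hdd.differentiableOn
        (fun p hp => hUsub hp))
      apply Differentiable.differentiableOn
      fun_prop
    · simp only [G3]
      simp only [div_eq_mul_inv]
      refine DifferentiableOn.mul ?_ (DifferentiableOn.inv hdd.differentiableOn
        (fun p hp => hUsub hp))
      apply Differentiable.differentiableOn
      fun_prop
    · simp only [G3]
      simp only [div_eq_mul_inv]
      refine DifferentiableOn.mul ?_ (DifferentiableOn.inv hdd.differentiableOn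
        (fun p hp => hUsub hp))
      apply Differentiable.differentiableOn
      fun_prop
  · exact ⟨hpz1, hpz2, hpz3, hpw1, hpw2, hpw3, hpzz2, hfzw,
      by rw [hpww1]; simp,
      by rw [hpww1]; simp; linarith,
      by rw [hpww3]; simp,
      hfzzw⟩
end
end
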